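/- Let d' be an odd-dimensional Heisenberg Lie algebra with basis {a₁,…,a_n, b₁,…,b_n, c} and nonzero brackets [aᵢ, bᵢ] = c. Then r = Σᵢ (aᵢ ⊗ bᵢ − bᵢ ⊗ aᵢ) and s = −c satisfy the equations [r, Δ(s)] = 0 and ([r₁₂, r₁₃] + r₁₂ s₃) + cyclic = 0 in U(d')^{⊗3}. -/

import Mathlib

/-!
In `U(d)` the commutator of `ι x` and `ι y` is `ι ⁅x, y⁆`, so
`[(x ⊗ y)₁₂, (x' ⊗ y')₁₃] = ⁅x, x'⁆ ⊗ y ⊗ y'`. For `r = Σᵢ (aᵢ ⊗ bᵢ − bᵢ ⊗ aᵢ)` the Heisenberg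
relations kill every term except the diagonal ones, leaving `[r₁₂, r₁₃] = c ⊗ r`. Moreover
`r₁₂ s₃ = −r ⊗ c` is minus the cyclic shift `σ(c ⊗ r)`, so `[r₁₂, r₁₃] + r₁₂ s₃ = Y − σY` with
`Y = c ⊗ r`, and its cyclic sum vanishes because `σ³ = 1`. The equation `[r, Δ(s)] = 0` holds
because `c` commutes with every `aᵢ` and `bᵢ`.
-/

open TensorProduct

noncomputable section

attribute [local instance 100] LieRing.ofAssociativeRing

variable (k : Type*) [Field k] [CharZero k]
variable (d : Type*) [LieRing d] [LieAlgebra k d]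

local notation "Uk" => UniversalEnvelopingAlgebra k d

/-- The canonical embedding `d → U(d)`. -/
def iotaU : d →ₗ[k] Uk := (UniversalEnvelopingAlgebra.ι k).toLinearMap

/-- The image of `r ∈ d ⊗ d` in `U(d) ⊗ U(d)`. -/
def rU : d ⊗[k] d →ₗ[k] Uk ⊗[k] Uk := TensorProduct.map (iotaU k d) (iotaU k d)

/-- `u ↦ u₁₂ = u ⊗ 1`, placing `u ∈ U ⊗ U` in the first two factors of `U^{⊗3}`. -/
def emb12 : Uk ⊗[k] Uk →ₗ[k] Uk ⊗[k] (Uk ⊗[k] Uk) :=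
  (TensorProduct.assoc k Uk Uk Uk).toLinearMap ∘ₗ
    ((TensorProduct.mk k (Uk ⊗[k] Uk) Uk).flip 1)

/-- `u ↦ u₁₃`, placing `u ∈ U ⊗ U` in the first and third factors of `U^{⊗3}`. -/
def emb13 : Uk ⊗[k] Uk →ₗ[k] Uk ⊗[k] (Uk ⊗[k] Uk) :=
  TensorProduct.map LinearMap.id (TensorProduct.mk k Uk Uk 1)

/-- The cyclic permutation `x ⊗ y ⊗ z ↦ y ⊗ z ⊗ x` of `U^{⊗3}`. -/
def cyc : Uk ⊗[k] (Uk ⊗[k] Uk) →ₗ[k] Uk ⊗[k] (Uk ⊗[k] Uk) :=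
  (TensorProduct.assoc k Uk Uk Uk).toLinearMap ∘ₗ
    (TensorProduct.comm k Uk (Uk ⊗[k] Uk)).toLinearMap

/-- `E = [r₁₂, r₁₃] + r₁₂ · s₃` in `U^{⊗3}` (the bracket is the commutator). -/
def cybTerm (r : d ⊗[k] d) (s : d) : Uk ⊗[k] (Uk ⊗[k] Uk) :=
  (emb12 k d (rU k d r) * emb13 k d (rU k d r)
      - emb13 k d (rU k d r) * emb12 k d (rU k d r))
    + emb12 k d (rU k d r) * ((1 : Uk) ⊗ₜ[k] ((1 : Uk) ⊗ₜ[k] iotaU k d s))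

/-- Equations (1) `[r, Δ(s)] = 0` (with `Δ(s) = s⊗1 + 1⊗s`) and
(2) `([r₁₂, r₁₃] + r₁₂ s₃) + cyclic = 0`. -/
def SolvesModifiedCYB (r : d ⊗[k] d) (s : d) : Prop :=
  (rU k d r * ((iotaU k d s) ⊗ₜ[k] (1 : Uk) + (1 : Uk) ⊗ₜ[k] (iotaU k d s))
      - ((iotaU k d s) ⊗ₜ[k] (1 : Uk) + (1 : Uk) ⊗ₜ[k] (iotaU k d s)) * rU k d r = 0)
  ∧ cybTerm k d r s + cyc k d (cybTerm k d r s) + cyc k d (cyc k d (cybTerm k d r s)) = 0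

section

omit [CharZero k]
variable {k d} {ι : Type*} [Fintype ι]

theorem iotaU_lie (x y : d) : iotaU k d ⁅x, y⁆ = ⁅iotaU k d x, iotaU k d y⁆ :=
  LieHom.map_lie _ _ _

theorem rU_tmul (x y : d) : rU k d (x ⊗ₜ y) = iotaU k d x ⊗ₜ iotaU k d y := rfl

theorem emb12_tmul (x y : Uk) : emb12 k d (x ⊗ₜ y) = x ⊗ₜ (y ⊗ₜ 1) := rfl

theorem emb13_tmul (x y : Uk) : emb13 k d (x ⊗ₜ y) = x ⊗ₜ (1 ⊗ₜ y) := rfl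

theorem cyc_tmul (x y z : Uk) : cyc k d (x ⊗ₜ (y ⊗ₜ z)) = y ⊗ₜ (z ⊗ₜ x) := rfl

theorem cyc_cyc_cyc (t : Uk ⊗[k] (Uk ⊗[k] Uk)) : cyc k d (cyc k d (cyc k d t)) = t := by
  have h : cyc k d ∘ₗ cyc k d ∘ₗ cyc k d = LinearMap.id :=
    TensorProduct.ext_threefold' fun _ _ _ => rfl
  exact LinearMap.congr_fun h t

theorem cyc_tmul_eq_emb12_mul (u : Uk) (t : Uk ⊗[k] Uk) :
    cyc k d (u ⊗ₜ t) = emb12 k d t * (1 ⊗ₜ (1 ⊗ₜ u)) := by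
  induction t using TensorProduct.induction_on with
  | zero => simp
  | tmul x y => simp [cyc_tmul, emb12_tmul]
  | add t t' ht ht' => simp only [tmul_add, map_add, ht, ht', add_mul]

theorem sub_cyc_add_cyc_add_cyc_cyc (Y : Uk ⊗[k] (Uk ⊗[k] Uk)) :
    (Y - cyc k d Y) + cyc k d (Y - cyc k d Y) + cyc k d (cyc k d (Y - cyc k d Y)) = 0 := by
  simp only [map_sub, cyc_cyc_cyc]
  abel

theorem lie_emb12_tmul_emb13_tmul (x y x' y' : Uk) :
    ⁅emb12 k d (x ⊗ₜ y), emb13 k d (x' ⊗ₜ y')⁆ = ⁅x, x'⁆ ⊗ₜ (y ⊗ₜ y') := by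
  simp [emb12_tmul, emb13_tmul, Ring.lie_def, sub_tmul]

def skewSum (a b : ι → d) : d ⊗[k] d := ∑ i, (a i ⊗ₜ[k] b i - b i ⊗ₜ[k] a i)

theorem commute_rU_skewSum_delta (a b : ι → d) (s : d)
    (has : ∀ i, ⁅a i, s⁆ = 0) (hbs : ∀ i, ⁅b i, s⁆ = 0) :
    Commute (rU k d (skewSum a b)) (iotaU k d s ⊗ₜ 1 + 1 ⊗ₜ iotaU k d s) := by
  have commute_s : ∀ x : d, ⁅x, s⁆ = 0 → Commute (iotaU k d x) (iotaU k d s) := fun x hx =>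
    commute_iff_lie_eq.mpr (by rw [← iotaU_lie, hx, map_zero])
  have commute_tmul : ∀ x y : d, ⁅x, s⁆ = 0 → ⁅y, s⁆ = 0 →
      Commute (iotaU k d x ⊗ₜ[k] iotaU k d y) (iotaU k d s ⊗ₜ 1 + 1 ⊗ₜ iotaU k d s) :=
    fun x y hx hy =>
      ((commute_s x hx).tmul (.one_right _)).add_right ((Commute.one_right _).tmul (commute_s y hy))
  simp only [skewSum, map_sum, map_sub, rU_tmul]
  exact .sum_left _ _ _ fun i _ =>
    (commute_tmul _ _ (has i) (hbs i)).sub_left (commute_tmul _ _ (hbs i) (has i))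

variable [DecidableEq ι] (a b : ι → d) (c : d)

theorem lie_emb12_emb13_skewSum (ha : ∀ i j, ⁅a i, a j⁆ = 0) (hb : ∀ i j, ⁅b i, b j⁆ = 0)
    (hab : ∀ i j, ⁅a i, b j⁆ = if i = j then c else 0) :
    ⁅emb12 k d (rU k d (skewSum a b)), emb13 k d (rU k d (skewSum a b))⁆ =
      iotaU k d c ⊗ₜ rU k d (skewSum a b) := by
  simp only [skewSum, map_sum, map_sub, rU_tmul, sum_lie, lie_sum, sub_lie, lie_sub,
    lie_emb12_tmul_emb13_tmul, ← iotaU_lie, ← lie_skew (b _) (a _), ha, hb, hab]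
  simp [apply_ite, ite_tmul, Finset.sum_sub_distrib, tmul_sum, tmul_sub, neg_tmul]

theorem cybTerm_skewSum_neg (ha : ∀ i j, ⁅a i, a j⁆ = 0) (hb : ∀ i j, ⁅b i, b j⁆ = 0)
    (hab : ∀ i j, ⁅a i, b j⁆ = if i = j then c else 0) :
    cybTerm k d (skewSum a b) (-c) =
      iotaU k d c ⊗ₜ rU k d (skewSum a b) - cyc k d (iotaU k d c ⊗ₜ rU k d (skewSum a b)) := by
  rw [cybTerm, ← Ring.lie_def, lie_emb12_emb13_skewSum a b c ha hb hab, map_neg,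
    ← cyc_tmul_eq_emb12_mul, neg_tmul, map_neg, sub_eq_add_neg]

theorem solvesModifiedCYB_skewSum_neg (ha : ∀ i j, ⁅a i, a j⁆ = 0) (hb : ∀ i j, ⁅b i, b j⁆ = 0)
    (hab : ∀ i j, ⁅a i, b j⁆ = if i = j then c else 0)
    (hac : ∀ i, ⁅a i, c⁆ = 0) (hbc : ∀ i, ⁅b i, c⁆ = 0) :
    SolvesModifiedCYB k d (skewSum a b) (-c) := by
  refine ⟨sub_eq_zero.mpr (commute_rU_skewSum_delta a b (-c) ?_ ?_).eq, ?_⟩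
  · exact fun i => by rw [lie_neg, hac, neg_zero]
  · exact fun i => by rw [lie_neg, hbc, neg_zero]
  · rw [cybTerm_skewSum_neg a b c ha hb hab]
    exact sub_cyc_add_cyc_add_cyc_cyc _

end

theorem heisenberg_solves_modified_CYB
    {n : ℕ} (B : Module.Basis ((Fin n ⊕ Fin n) ⊕ Unit) k d)
    -- notation: `a i = B (inl (inl i))`, `b i = B (inl (inr i))`, `c = B (inr ())`
    (ha : ∀ i j, ⁅B (Sum.inl (Sum.inl i)), B (Sum.inl (Sum.inl j))⁆ = 0)
    (hb : ∀ i j, ⁅B (Sum.inl (Sum.inr i)), B (Sum.inl (Sum.inr j))⁆ = 0)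
    (hab : ∀ i j, ⁅B (Sum.inl (Sum.inl i)), B (Sum.inl (Sum.inr j))⁆ =
      if i = j then B (Sum.inr ()) else 0)
    (hac : ∀ i, ⁅B (Sum.inl (Sum.inl i)), B (Sum.inr ())⁆ = 0)
    (hbc : ∀ i, ⁅B (Sum.inl (Sum.inr i)), B (Sum.inr ())⁆ = 0) :
    SolvesModifiedCYB k d
      (∑ i : Fin n,
        (B (Sum.inl (Sum.inl i)) ⊗ₜ[k] B (Sum.inl (Sum.inr i))
          - B (Sum.inl (Sum.inr i)) ⊗ₜ[k] B (Sum.inl (Sum.inl i))))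
      (-(B (Sum.inr ()))) := by
  exact solvesModifiedCYB_skewSum_neg (fun i => B (.inl (.inl i))) (fun i => B (.inl (.inr i)))
    (B (.inr ())) ha hb hab hac hbc

end
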